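/- Let 0 ≤ m_n ≤ ⋯ ≤ m_1 be a weakly decreasing sequence of nonnegative integers and let (l_1, …, l_j) record the multiplicities of the distinct values (so l_1 is the number of occurrences of m_n, etc., and n = l_1 + ⋯ + l_j). With c_{m_n,…,m_1}(q) defined by the recursion c_{m_k,…,m_1}(q) = q^{k(k-1)m_k} ∑_{i=0}^{k-1} (-1)^{k+i+1} [k choose i]_q q^{(k-i)(k-1) - i(i-1)m_k} c_{m_i,…,m_1}(q) δ_{m_{i+1},m_k}, c_{m_1}(q) = 1, one has the closed form c_{m_n,…,m_1}(q) = ([n]!/([l_1]!⋯[l_j]!)) · q^{∑_{i=1}^{n} 2(i−1)m_i + (n(n−1) − ∑_{i=1}^{j} l_i(l_i−1))/2}. In particular c_{m_n,…,m_1}(q) ∈ ℤ[q,q^{−1}]. -/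

import Mathlib

/-!
Put `N = k + 1` and let `l` be the multiplicity of the last value `m_N`. As `m` is weakly
decreasing, `m_i = m_N` exactly for the last `l` indices, so only the summands with
`N - l ≤ j < N` survive in the recursion for `c_N`. For such `j` the multiplicities of
`m_1, …, m_j` are those of `m_1, …, m_N` except that `l` drops to `l - r`, `r = N - j`; hence, by
induction, the `j`-th summand is the closed form for `N` times `(-1)^(r+1) q^(r(l-1)) [l choose r]`.
These factors sum to `1`: this is the `q`-binomial theorem
`∑_r q^(r(l-1)) [l choose r] t^r = ∏_{i<l} (1 + q^(2i) t)` at `t = -1`.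
That `c_N ∈ ℤ[q, q⁻¹]` is read off the recursion, as `q`-Pascal keeps `[l choose r]` there.
-/

open Finset

noncomputable def qq : RatFunc ℂ := RatFunc.X

noncomputable def qint (m : ℕ) : RatFunc ℂ := (qq ^ m - qq⁻¹ ^ m) / (qq - qq⁻¹)

noncomputable def qfact : ℕ → RatFunc ℂ
  | 0 => 1
  | n + 1 => qint (n + 1) * qfact n

noncomputable def qbinom (n r : ℕ) : RatFunc ℂ :=
  if r ≤ n then qfact n / (qfact (n - r) * qfact r) else 0

/-- The coefficients `c_{m_k,…,m_1}(q)` defined by the paper's recursion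
(`m i` is the entry `m_i`; the empty coefficient is `1`). -/
noncomputable def cC (m : ℕ → ℕ) : ℕ → RatFunc ℂ
  | 0 => 1
  | k + 1 =>
      qq ^ ((k + 1) * k * m (k + 1)) *
        ∑ j ∈ (Finset.range (k + 1)).attach,
          (-1 : RatFunc ℂ) ^ (k + 1 + j.1 + 1) * qbinom (k + 1) j.1 *
            qq ^ ((k + 1 - j.1) * k) * qq⁻¹ ^ (j.1 * (j.1 - 1) * m (k + 1)) *
            (if m (j.1 + 1) = m (k + 1) then cC m j.1 else 0)
  termination_by k => k
  decreasing_by exact Finset.mem_range.mp j.2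

def mult (m : ℕ → ℕ) (n v : ℕ) : ℕ := ((Finset.Icc 1 n).filter (fun i => m i = v)).card

def vals (m : ℕ → ℕ) (n : ℕ) : Finset ℕ := (Finset.Icc 1 n).image m

/-- The closed-form coefficient of Lemma 9:
`([n]!/([l₁]!⋯[l_j]!)) · q^{∑ 2(i-1)mᵢ + (n(n-1) - ∑ lᵢ(lᵢ-1))/2}`,
where the `lᵢ` are the multiplicities of the distinct values of the tuple. -/
noncomputable def cF (m : ℕ → ℕ) (n : ℕ) : RatFunc ℂ :=
  (qfact n / ∏ v ∈ vals m n, qfact (mult m n v)) *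
    qq ^ (∑ i ∈ Finset.Icc 1 n, 2 * (i - 1) * m i +
      (n * (n - 1) - ∑ v ∈ vals m n, mult m n v * (mult m n v - 1)) / 2)

lemma qq_ne_zero : qq ≠ 0 := RatFunc.X_ne_zero

lemma qq_pow_ne_one {k : ℕ} (hk : 0 < k) : qq ^ k ≠ 1 := by
  intro h
  have hX : (Polynomial.X ^ k : Polynomial ℂ) = 1 := by
    apply RatFunc.algebraMap_injective ℂ
    rw [map_pow, RatFunc.algebraMap_X, map_one]
    exact h
  have := congrArg Polynomial.natDegree hX
  rw [Polynomial.natDegree_X_pow, Polynomial.natDegree_one] at this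
  omega

lemma qq_pow_sub_inv_pow_ne_zero {k : ℕ} (hk : 0 < k) : qq ^ k - qq⁻¹ ^ k ≠ 0 := by
  intro h
  apply qq_pow_ne_one (k := k + k) (by omega)
  rw [pow_add]
  nth_rewrite 2 [sub_eq_zero.mp h]
  rw [← mul_pow, mul_inv_cancel₀ qq_ne_zero, one_pow]

lemma qint_ne_zero {k : ℕ} (hk : 0 < k) : qint k ≠ 0 :=
  div_ne_zero (qq_pow_sub_inv_pow_ne_zero hk) (by simpa using qq_pow_sub_inv_pow_ne_zero one_pos)

lemma qfact_ne_zero (n : ℕ) : qfact n ≠ 0 := by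
  induction n with
  | zero => exact one_ne_zero
  | succ n ih => exact mul_ne_zero (qint_ne_zero n.succ_pos) ih

lemma qint_add (a b : ℕ) : qint (a + b) = qq ^ b * qint a + qq⁻¹ ^ a * qint b := by
  simp only [qint, pow_add]
  ring

lemma qq_pow_add_mul_inv_pow (a b : ℕ) : qq ^ (a + b) * qq⁻¹ ^ b = qq ^ a := by
  rw [pow_add, mul_assoc, ← mul_pow, mul_inv_cancel₀ qq_ne_zero, one_pow, mul_one]

lemma qbinom_of_le {n r : ℕ} (h : r ≤ n) : qbinom n r = qfact n / (qfact (n - r) * qfact r) :=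
  if_pos h

lemma qbinom_of_lt {n r : ℕ} (h : n < r) : qbinom n r = 0 :=
  if_neg (Nat.not_le.mpr h)

lemma qbinom_zero_right (n : ℕ) : qbinom n 0 = 1 := by
  rw [qbinom_of_le n.zero_le, Nat.sub_zero, qfact, mul_one, div_self (qfact_ne_zero n)]

lemma qbinom_self (n : ℕ) : qbinom n n = 1 := by
  rw [qbinom_of_le le_rfl, Nat.sub_self, qfact, one_mul, div_self (qfact_ne_zero n)]

lemma qbinom_succ_succ (l i : ℕ) :
    qbinom (l + 1) (i + 1) = qq ^ l * qq⁻¹ ^ i * qbinom l i + qq⁻¹ ^ (i + 1) * qbinom l (i + 1) := by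
  rcases lt_trichotomy i l with h | rfl | h
  · obtain ⟨d, rfl⟩ := Nat.exists_eq_add_of_lt h
    have hN : qfact (i + d + 1 + 1) =
        (qq ^ (d + 1) * qint (i + 1) + qq⁻¹ ^ (i + 1) * qint (d + 1)) * qfact (i + d + 1) := by
      rw [← qint_add, qfact, show i + 1 + (d + 1) = i + d + 1 + 1 by omega]
    have hd : qfact (d + 1) = qint (d + 1) * qfact d := rfl
    have hi : qfact (i + 1) = qint (i + 1) * qfact i := rfl
    rw [qbinom_of_le (by omega), qbinom_of_le (by omega), qbinom_of_le (by omega),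
      show i + d + 1 + 1 - (i + 1) = d + 1 by omega, show i + d + 1 - i = d + 1 by omega,
      show i + d + 1 - (i + 1) = d by omega, show i + d + 1 = d + 1 + i by omega,
      qq_pow_add_mul_inv_pow, show d + 1 + i + 1 = i + d + 1 + 1 by omega,
      show d + 1 + i = i + d + 1 by omega, hN, hd, hi]
    have := qfact_ne_zero i
    have := qfact_ne_zero d
    have := qint_ne_zero i.succ_pos
    have := qint_ne_zero d.succ_pos
    field_simp
  · rw [qbinom_self, qbinom_self, qbinom_of_lt i.lt_succ_self, ← mul_pow,
      mul_inv_cancel₀ qq_ne_zero]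
    ring
  · rw [qbinom_of_lt (by omega), qbinom_of_lt h, qbinom_of_lt (by omega)]
    ring

theorem sum_qbinom_mul_pow (l : ℕ) (t : RatFunc ℂ) :
    ∑ r ∈ range (l + 1), qq ^ (r * l) * qq⁻¹ ^ r * qbinom l r * t ^ r =
      ∏ i ∈ range l, (1 + qq ^ (2 * i) * t) := by
  induction l with
  | zero => simp [qbinom_zero_right]
  | succ l ih =>
    set g := fun r => qq ^ (r * l) * qq⁻¹ ^ r * qbinom l r * t ^ r
    have hstep : ∀ k, qq ^ ((k + 1) * (l + 1)) * qq⁻¹ ^ (k + 1) * qbinom (l + 1) (k + 1) * t ^ (k + 1)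
        = qq ^ (2 * l) * t * g k + g (k + 1) := by
      intro k
      have := qq_ne_zero
      simp only [g, qbinom_succ_succ, inv_pow]
      field_simp
      ring
    have hshift : ∑ k ∈ range (l + 1), g (k + 1) + g 0 = ∑ k ∈ range (l + 1), g k := by
      rw [← sum_range_succ' g, sum_range_succ]
      simp [g, qbinom_of_lt l.lt_succ_self]
    rw [prod_range_succ, ← ih, sum_range_succ', sum_congr rfl fun k _ => hstep k, sum_add_distrib,
      ← mul_sum, add_assoc, show qq ^ (0 * (l + 1)) * qq⁻¹ ^ 0 * qbinom (l + 1) 0 * t ^ 0 = g 0 by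
        simp [g, qbinom_zero_right], hshift]
    ring

lemma sum_neg_one_pow_qbinom {l : ℕ} (hl : 1 ≤ l) :
    ∑ s ∈ range l, (-1) ^ s * qq ^ ((s + 1) * l) * qq⁻¹ ^ (s + 1) * qbinom l (s + 1) = 1 := by
  have h := sum_qbinom_mul_pow l (-1)
  rw [prod_eq_zero (mem_range.mpr hl) (by simp), sum_range_succ'] at h
  simp only [zero_mul, pow_zero, qbinom_zero_right, mul_one] at h
  have hneg : ∑ s ∈ range l, (-1) ^ s * qq ^ ((s + 1) * l) * qq⁻¹ ^ (s + 1) * qbinom l (s + 1) =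
      -∑ s ∈ range l, qq ^ ((s + 1) * l) * qq⁻¹ ^ (s + 1) * qbinom l (s + 1) * (-1) ^ (s + 1) := by
    rw [← sum_neg_distrib]
    exact sum_congr rfl fun s _ => by ring
  linear_combination hneg - h

def laurentSubring : Subring (RatFunc ℂ) where
  carrier := {x | ∃ (p : Polynomial ℤ) (t : ℕ), x = qq⁻¹ ^ t * Polynomial.aeval qq p}
  mul_mem' := by
    rintro _ _ ⟨p, t, rfl⟩ ⟨r, s, rfl⟩
    exact ⟨p * r, t + s, by rw [map_mul, pow_add]; ring⟩
  one_mem' := ⟨1, 0, by simp⟩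
  add_mem' := by
    rintro _ _ ⟨p, t, rfl⟩ ⟨r, s, rfl⟩
    refine ⟨Polynomial.X ^ s * p + Polynomial.X ^ t * r, t + s, ?_⟩
    have := qq_ne_zero
    simp only [map_add, map_mul, map_pow, Polynomial.aeval_X, pow_add, inv_pow]
    field_simp
  zero_mem' := ⟨0, 0, by simp⟩
  neg_mem' := by
    rintro _ ⟨p, t, rfl⟩
    exact ⟨-p, t, by rw [map_neg, mul_neg]⟩

lemma qq_mem_laurentSubring : qq ∈ laurentSubring := ⟨Polynomial.X, 0, by simp⟩

lemma qq_inv_mem_laurentSubring : qq⁻¹ ∈ laurentSubring := ⟨1, 1, by simp⟩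

lemma qbinom_mem_laurentSubring (n r : ℕ) : qbinom n r ∈ laurentSubring := by
  induction n generalizing r with
  | zero =>
    rcases r with _ | r
    · rw [qbinom_zero_right]; exact one_mem _
    · rw [qbinom_of_lt r.succ_pos]; exact zero_mem _
  | succ n ih =>
    rcases r with _ | r
    · rw [qbinom_zero_right]; exact one_mem _
    · rw [qbinom_succ_succ]
      have := qq_mem_laurentSubring
      have := qq_inv_mem_laurentSubring
      have := ih r
      have := ih (r + 1)
      apply_rules [add_mem, mul_mem, pow_mem]

lemma mul_sub_one_eq_two_mul_choose_two (x : ℕ) : x * (x - 1) = 2 * x.choose 2 := by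
  rw [Nat.choose_two_right, Nat.mul_div_cancel' (Nat.even_mul_pred_self x).two_dvd]

lemma choose_two_add (a b : ℕ) : (a + b).choose 2 = a.choose 2 + a * b + b.choose 2 := by
  qify
  simp only [Nat.cast_choose_two]
  push_cast
  ring

lemma sum_choose_two_le {ι : Type*} (s : Finset ι) (f : ι → ℕ) :
    ∑ i ∈ s, (f i).choose 2 ≤ (∑ i ∈ s, f i).choose 2 := by
  induction s using Finset.cons_induction with
  | empty => simp
  | cons a s ha ih =>
    rw [sum_cons, sum_cons, choose_two_add]
    omega

section Multiplicities

variable (m : ℕ → ℕ)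

lemma sum_mult_vals (n : ℕ) : ∑ v ∈ vals m n, mult m n v = n := by
  simpa [vals, mult] using (card_eq_sum_card_image m (Icc 1 n)).symm

lemma mult_eq_zero_of_notMem {n v : ℕ} (hv : v ∉ vals m n) : mult m n v = 0 := by
  rw [mult, card_eq_zero, filter_eq_empty_iff]
  exact fun i hi h => hv (mem_image.mpr ⟨i, hi, h⟩)

@[to_additive]
lemma prod_vals_mult_eq_of_subset {M : Type*} [CommMonoid M] {F : ℕ → M} (hF : F 0 = 1)
    {n : ℕ} {s : Finset ℕ} (hs : vals m n ⊆ s) :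
    ∏ v ∈ vals m n, F (mult m n v) = ∏ v ∈ s, F (mult m n v) :=
  prod_subset hs fun _ _ hv => by rw [mult_eq_zero_of_notMem m hv, hF]

lemma exists_eq_last_iff (hmono : ∀ i j : ℕ, 1 ≤ i → i ≤ j → m j ≤ m i) {N : ℕ} (hN : 1 ≤ N) :
    ∃ a < N, ∀ i, 1 ≤ i → i ≤ N → (m i = m N ↔ a < i) := by
  classical
  have hex : ∃ a, m (a + 1) = m N := ⟨N - 1, by rw [Nat.sub_add_cancel hN]⟩
  refine ⟨Nat.find hex, ?_, fun i hi hiN => ⟨fun h => ?_, fun h => ?_⟩⟩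
  · have := Nat.find_min' hex (m := N - 1) (by rw [Nat.sub_add_cancel hN])
    omega
  · have := Nat.find_min' hex (m := i - 1) (by rwa [Nat.sub_add_cancel hi])
    omega
  · have h1 := hmono _ _ (Nat.le_add_left 1 _) h
    have h2 := hmono _ _ hi hiN
    rw [Nat.find_spec hex] at h1
    omega

variable {m} {a N c : ℕ} (htail : ∀ i, 1 ≤ i → i ≤ N → (m i = c ↔ a < i))
include htail

lemma mult_of_tail {j : ℕ} (hjN : j ≤ N) : mult m j c = j - a := by
  rw [mult, ← Nat.card_Ioc]
  congr 1
  ext i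
  simp only [mem_filter, mem_Icc, mem_Ioc]
  constructor
  · rintro ⟨⟨hi, hij⟩, h⟩
    exact ⟨(htail i hi (hij.trans hjN)).mp h, hij⟩
  · rintro ⟨hai, hij⟩
    exact ⟨⟨by omega, hij⟩, (htail i (by omega) (hij.trans hjN)).mpr hai⟩

lemma mult_of_tail_of_ne {j v : ℕ} (haj : a ≤ j) (hjN : j ≤ N) (hv : v ≠ c) :
    mult m j v = mult m a v := by
  rw [mult, mult]
  congr 1
  ext i
  simp only [mem_filter, mem_Icc]
  constructor
  · rintro ⟨⟨hi, hij⟩, rfl⟩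
    exact ⟨⟨hi, not_lt.mp fun hai => hv ((htail i hi (hij.trans hjN)).mpr hai)⟩, rfl⟩
  · rintro ⟨⟨hi, hia⟩, rfl⟩
    exact ⟨⟨hi, hia.trans haj⟩, rfl⟩

lemma vals_subset_of_tail {j : ℕ} (hjN : j ≤ N) : vals m j ⊆ insert c (vals m a) := by
  intro v hv
  obtain ⟨i, hi, rfl⟩ := mem_image.mp hv
  rw [mem_Icc] at hi
  by_cases hia : a < i
  · rw [(htail i hi.1 (hi.2.trans hjN)).mpr hia]
    exact mem_insert_self _ _
  · exact mem_insert_of_mem (mem_image.mpr ⟨i, mem_Icc.mpr ⟨hi.1, not_lt.mp hia⟩, rfl⟩)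

lemma notMem_vals_of_tail (haN : a ≤ N) : c ∉ vals m a := by
  intro hc
  obtain ⟨i, hi, hic⟩ := mem_image.mp hc
  rw [mem_Icc] at hi
  have := (htail i hi.1 (hi.2.trans haN)).mp hic
  omega

@[to_additive]
lemma prod_vals_mult_of_tail {M : Type*} [CommMonoid M] {F : ℕ → M} (hF : F 0 = 1)
    {j : ℕ} (haj : a ≤ j) (hjN : j ≤ N) :
    ∏ v ∈ vals m j, F (mult m j v) = F (j - a) * ∏ v ∈ vals m a, F (mult m a v) := by
  rw [prod_vals_mult_eq_of_subset m hF (vals_subset_of_tail htail hjN),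
    prod_insert (notMem_vals_of_tail htail (haj.trans hjN)), mult_of_tail htail hjN]
  exact congrArg _ (prod_congr rfl fun v hv =>
    congrArg F (mult_of_tail_of_ne htail haj hjN (ne_of_mem_of_not_mem hv
      (notMem_vals_of_tail htail (haj.trans hjN)))))

end Multiplicities

lemma sum_Icc_mul_add_of_const (m : ℕ → ℕ) (j c : ℕ) {r : ℕ}
    (hc : ∀ i, j < i → i ≤ j + r → m i = c) :
    ∑ i ∈ Icc 1 (j + r), 2 * (i - 1) * m i =
      ∑ i ∈ Icc 1 j, 2 * (i - 1) * m i + 2 * (j * r + r.choose 2) * c := by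
  induction r with
  | zero => simp
  | succ r ih =>
    rw [← add_assoc, sum_Icc_succ_top (by omega), ih fun i hji hir => hc i hji (by omega),
      hc (j + r + 1) (by omega) (by omega), Nat.choose_succ_succ', Nat.choose_one_right, Nat.add_sub_cancel]
    ring

lemma cF_eq (m : ℕ → ℕ) (n : ℕ) :
    cF m n = qfact n / (∏ v ∈ vals m n, qfact (mult m n v)) *
      qq ^ (∑ i ∈ Icc 1 n, 2 * (i - 1) * m i + n.choose 2) /
        qq ^ (∑ v ∈ vals m n, (mult m n v).choose 2) := by
  have hle : ∑ v ∈ vals m n, (mult m n v).choose 2 ≤ n.choose 2 :=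
    (sum_choose_two_le _ _).trans_eq (by rw [sum_mult_vals])
  have hexp : (n * (n - 1) - ∑ v ∈ vals m n, mult m n v * (mult m n v - 1)) / 2 =
      n.choose 2 - ∑ v ∈ vals m n, (mult m n v).choose 2 := by
    simp only [mul_sub_one_eq_two_mul_choose_two, ← mul_sum]
    omega
  rw [cF, hexp, ← Nat.add_sub_assoc hle, pow_sub₀ _ qq_ne_zero (le_add_left hle)]
  ring

noncomputable def cCSummand (m : ℕ → ℕ) (k j : ℕ) : RatFunc ℂ :=
  (-1 : RatFunc ℂ) ^ (k + 1 + j + 1) * qbinom (k + 1) j * qq ^ ((k + 1 - j) * k) *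
    qq⁻¹ ^ (j * (j - 1) * m (k + 1)) * (if m (j + 1) = m (k + 1) then cC m j else 0)

lemma cC_succ (m : ℕ → ℕ) (k : ℕ) :
    cC m (k + 1) = qq ^ ((k + 1) * k * m (k + 1)) * ∑ j ∈ range (k + 1), cCSummand m k j := by
  rw [cC]
  exact congrArg _ (sum_attach (range (k + 1)) (cCSummand m k))

lemma cC_mem_laurentSubring (m : ℕ → ℕ) (n : ℕ) : cC m n ∈ laurentSubring := by
  induction n using Nat.strong_induction_on with
  | _ n ih =>
    rcases n with _ | k
    · rw [cC]
      exact one_mem _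
    · rw [cC_succ]
      refine mul_mem (pow_mem qq_mem_laurentSubring _) (sum_mem fun j hj => ?_)
      have := neg_mem (one_mem laurentSubring)
      have := qq_mem_laurentSubring
      have := qq_inv_mem_laurentSubring
      have := qbinom_mem_laurentSubring (k + 1) j
      have := ih j (mem_range.mp hj)
      clear ih
      unfold cCSummand
      split_ifs <;> apply_rules [mul_mem, pow_mem, zero_mem]

/- All exponents become polynomials in `choose 2`-atoms once every `x * (x - 1)` is written as
`2 * x.choose 2` and `choose 2` of a sum is split by `choose_two_add`; then `field_simp; ring`
closes the identity. -/
lemma pow_mul_cCSummand_of_tail {m : ℕ → ℕ} {a k s : ℕ}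
    (htail : ∀ i, 1 ≤ i → i ≤ k + 1 → (m i = m (k + 1) ↔ a < i)) (hs : a + s ≤ k)
    (ih : cC m (k - s) = cF m (k - s)) :
    qq ^ ((k + 1) * k * m (k + 1)) * cCSummand m k (k - s) =
      cF m (k + 1) * ((-1) ^ s * qq ^ ((s + 1) * (k + 1 - a)) * qq⁻¹ ^ (s + 1) *
        qbinom (k + 1 - a) (s + 1)) := by
  obtain ⟨l, rfl⟩ := Nat.exists_eq_add_of_le hs
  rw [show a + s + l - s = a + l by omega] at ih ⊢
  unfold cCSummand
  rw [show a + s + l + 1 = a + l + (s + 1) by omega] at htail ⊢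
  have hcond : m (a + l + 1) = m (a + l + (s + 1)) := (htail _ (by omega) (by omega)).mpr (by omega)
  have hA := sum_Icc_mul_add_of_const m (a + l) (m (a + l + (s + 1))) (r := s + 1)
    fun i hi hiN => (htail i (by omega) hiN).mpr (by omega)
  have hsign : (-1 : RatFunc ℂ) ^ (a + l + (s + 1) + (a + l) + 1) = (-1) ^ s := by
    rw [show a + l + (s + 1) + (a + l) + 1 = 2 * (a + l + 1) + s by omega, pow_add, pow_mul]
    simp
  rw [if_pos hcond, ih, cF_eq, cF_eq,
    prod_vals_mult_of_tail htail (F := qfact) rfl (by omega) (by omega),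
    prod_vals_mult_of_tail htail (F := qfact) rfl (by omega) le_rfl,
    sum_vals_mult_of_tail htail (F := (Nat.choose · 2)) rfl (by omega) (by omega),
    sum_vals_mult_of_tail htail (F := (Nat.choose · 2)) rfl (by omega) le_rfl, hsign, hA,
    Nat.add_sub_cancel_left, Nat.add_sub_cancel_left, show a + l + (s + 1) - a = l + (s + 1) by omega,
    show a + s + l = a + l + (s + 1) - 1 by omega, mul_sub_one_eq_two_mul_choose_two,
    mul_sub_one_eq_two_mul_choose_two, choose_two_add (a + l) (s + 1), choose_two_add l (s + 1),
    qbinom_of_le (by omega), qbinom_of_le (by omega), Nat.add_sub_cancel, Nat.add_sub_cancel_left]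
  rw [show a + l + (s + 1) - 1 = a + l + s by omega]
  have := qq_ne_zero
  have := qfact_ne_zero l
  have := qfact_ne_zero (a + l)
  have := qfact_ne_zero (s + 1)
  have := qfact_ne_zero (l + (s + 1))
  have := prod_ne_zero_iff.mpr fun v (_ : v ∈ vals m a) => qfact_ne_zero (mult m a v)
  simp only [inv_pow]
  field_simp
  ring

theorem cC_eq_cF (m : ℕ → ℕ) (hmono : ∀ i j : ℕ, 1 ≤ i → i ≤ j → m j ≤ m i) (n : ℕ) :
    cC m n = cF m n := by
  induction n using Nat.strong_induction_on with
  | _ n ih =>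
    rcases n with _ | k
    · simp [cC, cF, vals, qfact]
    obtain ⟨a, haN, htail⟩ := exists_eq_last_iff m hmono k.succ_pos
    have hvanish : ∀ s ∈ range (k + 1), s ∉ range (k + 1 - a) →
        qq ^ ((k + 1) * k * m (k + 1)) * cCSummand m k (k - s) = 0 := by
      intro s hs hsa
      rw [mem_range] at hs hsa
      rw [cCSummand, if_neg fun h => by have := (htail _ (by omega) (by omega)).mp h; omega]
      simp
    rw [cC_succ, ← sum_range_reflect, Nat.add_sub_cancel, mul_sum,
      ← sum_subset (range_subset_range.mpr (Nat.sub_le _ _)) hvanish,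
      sum_congr rfl fun s hs => pow_mul_cCSummand_of_tail htail (by rw [mem_range] at hs; omega)
        (ih _ (by omega)), ← mul_sum, sum_neg_one_pow_qbinom (by omega), mul_one]

theorem stmt6_general (m : ℕ → ℕ) (n : ℕ)
    (hmono : ∀ i j : ℕ, 1 ≤ i → i ≤ j → m j ≤ m i) :
    cC m n = cF m n ∧
      ∃ (p : Polynomial ℤ) (t : ℕ), cC m n = qq⁻¹ ^ t * Polynomial.aeval qq p :=
  ⟨cC_eq_cF m hmono n, cC_mem_laurentSubring m n⟩

/-- the recursive coefficients agree with the closed form of Lemma 9,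
and in particular lie in `ℤ[q,q⁻¹]`. -/
theorem stmt6 (m : ℕ → ℕ) (n : ℕ) (hn : 1 ≤ n)
    (hmono : ∀ i j : ℕ, 1 ≤ i → i ≤ j → m j ≤ m i) :
    cC m n = cF m n ∧
      ∃ (p : Polynomial ℤ) (t : ℕ), cC m n = qq⁻¹ ^ t * Polynomial.aeval qq p :=
  stmt6_general m n hmono
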